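/- arXiv:2010.03198 — 2 statements merged into one kernel-verified Lean document; each statement's English description precedes it below -/
import Mathlib

section
/- Let a ∈ (ℤ/2)^d nonzero and n_1,…,n_d ≥ 3 with h = gcd(n_1,…,n_d). Let B = (A_{K_{n_1}}^{a_1} ⊗ ⋯ ⊗ A_{K_{n_d}}^{a_d}) ⊗ I_{2^r}. Then exp(-i(2π/h)B) = exp((-1)^{w(a)-1}(2π/h)i) · I_{2^r n_1⋯n_d}. -/
open Kronecker

/-- Adjacency matrix of the complete graph `K_n`, as a complex matrix. -/
noncomputable def Kadj (n : ℕ) : Matrix (Fin n) (Fin n) ℂ :=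
  Matrix.of fun i j => if i = j then 0 else 1

/-- Adjacency matrix of `K_2`, indexed by `ZMod 2`. -/
noncomputable def A2 : Matrix (ZMod 2) (ZMod 2) ℂ :=
  Matrix.of fun i j => if i = j then 0 else 1

/-- Kronecker product of a family of matrices. -/
noncomputable def kronC {d : ℕ} {n : Fin d → ℕ}
    (M : ∀ i, Matrix (Fin (n i)) (Fin (n i)) ℂ) :
    Matrix (∀ i, Fin (n i)) (∀ i, Fin (n i)) ℂ :=
  Matrix.of fun u v => ∏ i, M i (u i) (v i)

/-- `M_a = A_{K_2}^{a_1} ⊗ ⋯ ⊗ A_{K_2}^{a_r}` for `a ∈ (ℤ/2)^r`. -/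
noncomputable def cube {r : ℕ} (a : Fin r → ZMod 2) :
    Matrix (Fin r → ZMod 2) (Fin r → ZMod 2) ℂ :=
  Matrix.of fun u v => ∏ j, (if a j = 1 then A2 else 1) (u j) (v j)

/-- `A_{K_{n_1}}^{a_1} ⊗ ⋯ ⊗ A_{K_{n_d}}^{a_d}`. -/
noncomputable def compKron {d : ℕ} (n : Fin d → ℕ) (a : Fin d → ZMod 2) :
    Matrix (∀ i, Fin (n i)) (∀ i, Fin (n i)) ℂ :=
  kronC fun i => if a i = 1 then Kadj (n i) else 1

/-- Hamming weight. -/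
def wt {m : ℕ} (a : Fin m → ZMod 2) : ℕ :=
  (Finset.univ.filter fun i => a i = 1).card

/-!
With `J = Matrix.of 1` the all-ones matrix, `A_{K_n} = J - 1` and `J * J = n • J`. Expanding
the Kronecker product, `B = (-1)^{w(a)} • 1 + ∑_{S ≠ ∅} ε_S • Q_S` with integers
`ε_S = compKronCoeff a S`, where `Q_S = onesKron n S ⊗ₖ 1` is `J` on the coordinates in `S` and
`1` elsewhere. The `Q_S` commute pairwise and satisfy
`Q_S * Q_S = N_S • Q_S` with `N_S = ∏_{i ∈ S} n_i`, so `Q_S / N_S` is idempotent and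
`exp (t • Q_S) = 1 + ((exp (t N_S) - 1) / N_S) • Q_S`. As `h ∣ N_S`, every nonempty `S`
contributes the factor `1` to `exp (-i (2π/h) • B)`, and only the scalar term survives.
-/

section TopologicalAlgebra

variable {A : Type*} [Ring A] [Algebra ℂ A] [TopologicalSpace A] [IsTopologicalRing A]
  [ContinuousSMul ℂ A] [T2Space A]

open Nat in
theorem exp_smul_of_isIdempotentElem {P : A} (hP : IsIdempotentElem P) (w : ℂ) :
    NormedSpace.exp (w • P) = 1 + (Complex.exp w - 1) • P := by
  have hterm : (fun k : ℕ => ((k !⁻¹ : ℂ) • w ^ k) • P + if k = 0 then 1 - P else 0) =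
      fun k => (k !⁻¹ : ℂ) • (w • P) ^ k := by
    funext k
    rcases k with _ | k
    · simp
    · simp [smul_pow, hP.pow_succ_eq, smul_smul]
  have hsum := ((NormedSpace.exp_series_hasSum_exp' (𝕂 := ℂ) w).smul_const P).add
    (hasSum_ite_eq 0 (1 - P))
  rw [hterm] at hsum
  rw [congrFun (NormedSpace.exp_eq_tsum ℂ) (w • P), hsum.tsum_eq, ← Complex.exp_eq_exp_ℂ,
    sub_smul, one_smul]
  abel

theorem exp_smul_eq_one_of_mul_self_eq_smul {P : A} {N : ℂ} (hN : N ≠ 0) (hP : P * P = N • P)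
    {w : ℂ} (hw : Complex.exp (w * N) = 1) :
    NormedSpace.exp (w • P) = 1 := by
  have hidem : IsIdempotentElem (N⁻¹ • P) := by
    rw [IsIdempotentElem, smul_mul_smul_comm, hP, smul_smul, mul_assoc, inv_mul_cancel₀ hN,
      mul_one]
  rw [show w • P = (w * N) • N⁻¹ • P by rw [smul_smul, mul_assoc, mul_inv_cancel₀ hN, mul_one],
    exp_smul_of_isIdempotentElem hidem, hw, sub_self, zero_smul, add_zero]

end TopologicalAlgebra

theorem Matrix.exp_sum_eq_one {m ι : Type*} [Fintype m] [DecidableEq m] {s : Finset ι}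
    {f : ι → Matrix m m ℂ} (hc : (s : Set ι).Pairwise (Function.onFun Commute f))
    (h1 : ∀ i ∈ s, NormedSpace.exp (f i) = 1) :
    NormedSpace.exp (∑ i ∈ s, f i) = 1 := by
  rw [Matrix.exp_sum_of_commute s f hc]
  exact (Finset.noncommProd_eq_pow_card s _ _ 1 h1).trans (one_pow _)

theorem Matrix.of_one_mul_of_one {ι R : Type*} [Fintype ι] [NonAssocSemiring R] :
    (of 1 : Matrix ι ι R) * of 1 = (Fintype.card ι : R) • of 1 := by
  ext; simp [Matrix.mul_apply]

section kronC

variable {d : ℕ} {n : Fin d → ℕ}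

theorem kronC_mul (M M' : ∀ i, Matrix (Fin (n i)) (Fin (n i)) ℂ) :
    kronC M * kronC M' = kronC (M * M') := by
  ext u v
  simp only [kronC, Matrix.mul_apply, Matrix.of_apply, Pi.mul_apply, Fintype.prod_sum,
    Finset.prod_mul_distrib]

theorem kronC_one : kronC (1 : ∀ i, Matrix (Fin (n i)) (Fin (n i)) ℂ) = 1 := by
  ext u v
  simp [kronC, Matrix.one_apply, Finset.prod_boole, funext_iff]

theorem kronC_smul (c : Fin d → ℂ) (M : ∀ i, Matrix (Fin (n i)) (Fin (n i)) ℂ) :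
    kronC (fun i => c i • M i) = (∏ i, c i) • kronC M := by
  ext u v
  simp [kronC, Finset.prod_mul_distrib]

theorem commute_kronC {M M' : ∀ i, Matrix (Fin (n i)) (Fin (n i)) ℂ}
    (h : ∀ i, Commute (M i) (M' i)) : Commute (kronC M) (kronC M') := by
  rw [Commute, SemiconjBy, kronC_mul, kronC_mul]
  exact congrArg kronC (funext fun i => (h i).eq)

theorem kronC_smul_add_smul (α β : Fin d → ℂ) (M M' : ∀ i, Matrix (Fin (n i)) (Fin (n i)) ℂ) :
    kronC (fun i => α i • M i + β i • M' i) =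
      ∑ S : Finset (Fin d), ((∏ i ∈ S, α i) * ∏ i ∈ Sᶜ, β i) •
        kronC fun i => if i ∈ S then M i else M' i := by
  ext u v
  simp only [kronC, Matrix.of_apply, Matrix.add_apply, Matrix.smul_apply, smul_eq_mul,
    Fintype.prod_add, Matrix.sum_apply]
  refine Finset.sum_congr rfl fun S _ => ?_
  have hS : ∏ i ∈ S, (if i ∈ S then M i else M' i) (u i) (v i) = ∏ i ∈ S, M i (u i) (v i) :=
    Finset.prod_congr rfl fun i hi => by rw [if_pos hi]
  have hSc : ∏ i ∈ Sᶜ, (if i ∈ S then M i else M' i) (u i) (v i) =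
      ∏ i ∈ Sᶜ, M' i (u i) (v i) :=
    Finset.prod_congr rfl fun i hi => by rw [if_neg (Finset.mem_compl.1 hi)]
  rw [← Finset.prod_mul_prod_compl S, hS, hSc, Finset.prod_mul_distrib, Finset.prod_mul_distrib]
  ring

end kronC

theorem Kadj_eq_of_one_sub_one (n : ℕ) : Kadj n = Matrix.of 1 - 1 := by
  ext i j
  by_cases h : i = j <;> simp [Kadj, h]

theorem one_le_wt {m : ℕ} {a : Fin m → ZMod 2} (ha : a ≠ 0) : 1 ≤ wt a := by
  obtain ⟨i, hi⟩ := Function.ne_iff.1 ha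
  have hi1 : a i = 1 := (by decide : ∀ x : ZMod 2, x ≠ 0 → x = 1) _ hi
  exact Finset.card_pos.2 ⟨i, Finset.mem_filter.2 ⟨Finset.mem_univ i, hi1⟩⟩

section onesKron

variable {d : ℕ} (n : Fin d → ℕ)

noncomputable def onesKron (S : Finset (Fin d)) : Matrix (∀ i, Fin (n i)) (∀ i, Fin (n i)) ℂ :=
  kronC fun i => if i ∈ S then Matrix.of 1 else 1

theorem onesKron_empty : onesKron n ∅ = 1 := by
  simp only [onesKron, Finset.notMem_empty, if_false]
  exact kronC_one

theorem onesKron_mul_self (S : Finset (Fin d)) :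
    onesKron n S * onesKron n S = (∏ i ∈ S, (n i : ℂ)) • onesKron n S := by
  have hfactor : ((fun i => if i ∈ S then Matrix.of 1 else 1) *
      fun i => if i ∈ S then Matrix.of 1 else 1) =
      fun i => (if i ∈ S then (n i : ℂ) else 1) •
        (if i ∈ S then Matrix.of 1 else 1 : Matrix (Fin (n i)) (Fin (n i)) ℂ) := by
    funext i
    rw [Pi.mul_apply]
    split_ifs <;> simp [Matrix.of_one_mul_of_one]
  rw [onesKron, kronC_mul, hfactor, kronC_smul, Finset.prod_ite_mem, Finset.univ_inter]

theorem commute_onesKron (S T : Finset (Fin d)) : Commute (onesKron n S) (onesKron n T) :=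
  commute_kronC fun i => by split_ifs <;> simp

def compKronCoeff (a : Fin d → ZMod 2) (S : Finset (Fin d)) : ℤ :=
  (∏ i ∈ S, if a i = 1 then 1 else 0) * ∏ i ∈ Sᶜ, if a i = 1 then -1 else 1

theorem compKronCoeff_empty (a : Fin d → ZMod 2) : compKronCoeff a ∅ = (-1) ^ wt a := by
  simp [compKronCoeff, Finset.prod_ite, wt]

theorem compKron_eq_sum (a : Fin d → ZMod 2) :
    compKron n a = ∑ S, (compKronCoeff a S : ℂ) • onesKron n S := by
  have hfactor : (fun i => if a i = 1 then Kadj (n i) else 1) = fun i =>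
      (((if a i = 1 then 1 else 0 : ℤ)) : ℂ) • Matrix.of 1 +
        (((if a i = 1 then -1 else 1 : ℤ)) : ℂ) • (1 : Matrix (Fin (n i)) (Fin (n i)) ℂ) := by
    funext i
    split_ifs <;> simp [Kadj_eq_of_one_sub_one, sub_eq_add_neg]
  rw [compKron, hfactor, kronC_smul_add_smul]
  simp [compKronCoeff, onesKron]

end onesKron

section onesKronecker

variable {d : ℕ} (n : Fin d → ℕ) {m : Type*} [DecidableEq m]

theorem compKron_kronecker_one_eq_sum (a : Fin d → ZMod 2) :
    compKron n a ⊗ₖ (1 : Matrix m m ℂ) =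
      ∑ S, (compKronCoeff a S : ℂ) • (onesKron n S ⊗ₖ (1 : Matrix m m ℂ)) := by
  rw [compKron_eq_sum]
  ext ⟨u, x⟩ ⟨v, y⟩
  simp [Matrix.sum_apply, Finset.sum_mul, mul_assoc]

theorem commute_onesKron_kronecker_one [Fintype m] (S T : Finset (Fin d)) :
    Commute (onesKron n S ⊗ₖ (1 : Matrix m m ℂ)) (onesKron n T ⊗ₖ (1 : Matrix m m ℂ)) := by
  rw [Commute, SemiconjBy, ← Matrix.mul_kronecker_mul, ← Matrix.mul_kronecker_mul,
    (commute_onesKron n S T).eq]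

theorem exp_smul_onesKron_kronecker_one_eq_one [Fintype m] (hn : ∀ i, n i ≠ 0)
    {S : Finset (Fin d)} (hS : S.Nonempty) (k : ℤ) :
    NormedSpace.exp ((-Complex.I * ((2 * Real.pi / ((Finset.univ.gcd n : ℕ) : ℝ) : ℝ) : ℂ) * k) •
      (onesKron n S ⊗ₖ (1 : Matrix m m ℂ))) = 1 := by
  obtain ⟨i₀, hi₀⟩ := hS
  have hN : ∏ i ∈ S, n i ≠ 0 := Finset.prod_ne_zero_iff.2 fun i _ => hn i
  obtain ⟨q, hq⟩ : Finset.univ.gcd n ∣ ∏ i ∈ S, n i :=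
    (Finset.gcd_dvd (Finset.mem_univ i₀)).trans (Finset.dvd_prod_of_mem n hi₀)
  have hh : ((Finset.univ.gcd n : ℕ) : ℂ) ≠ 0 := by
    rintro h0
    rw [Nat.cast_eq_zero.1 h0, zero_mul] at hq
    exact hN hq
  refine exp_smul_eq_one_of_mul_self_eq_smul (N := ∏ i ∈ S, (n i : ℂ))
    (by exact_mod_cast hN) ?_ ?_
  · rw [← Matrix.mul_kronecker_mul, onesKron_mul_self, one_mul, Matrix.smul_kronecker]
  · rw [Complex.exp_eq_one_iff]
    refine ⟨-(k * q), ?_⟩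
    rw [← Nat.cast_prod, hq]
    push_cast
    field_simp

end onesKronecker

theorem stmt12_general (d r : ℕ) (n : Fin d → ℕ) (hn : ∀ i, 3 ≤ n i)
    (a : Fin d → ZMod 2) (ha : a ≠ 0) :
    NormedSpace.exp
        ((-Complex.I * ((2 * Real.pi / ((Finset.univ.gcd n : ℕ) : ℝ) : ℝ) : ℂ)) •
          ((compKron n a) ⊗ₖ (1 : Matrix (Fin r → ZMod 2) (Fin r → ZMod 2) ℂ))) =
      Complex.exp ((-1 : ℂ) ^ (wt a - 1) *
          ((2 * Real.pi / ((Finset.univ.gcd n : ℕ) : ℝ) : ℝ) : ℂ) * Complex.I) •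
        (1 : Matrix ((∀ i, Fin (n i)) × (Fin r → ZMod 2))
          ((∀ i, Fin (n i)) × (Fin r → ZMod 2)) ℂ) := by
  set c : ℂ := -Complex.I * ((2 * Real.pi / ((Finset.univ.gcd n : ℕ) : ℝ) : ℝ) : ℂ)
  set Q := fun S => onesKron n S ⊗ₖ (1 : Matrix (Fin r → ZMod 2) (Fin r → ZMod 2) ℂ)
  have hcomm : ∀ S T, Commute ((c * compKronCoeff a S) • Q S) ((c * compKronCoeff a T) • Q T) :=
    fun S T => ((commute_onesKron_kronecker_one n S T).smul_left _).smul_right _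
  have hrest : NormedSpace.exp (∑ S ∈ Finset.univ.erase ∅, (c * compKronCoeff a S) • Q S) = 1 :=
    Matrix.exp_sum_eq_one (fun S _ T _ _ => hcomm S T) fun S hS =>
      exp_smul_onesKron_kronecker_one_eq_one n (fun i => Nat.ne_zero_of_lt (hn i))
        (Finset.nonempty_iff_ne_empty.2 (Finset.ne_of_mem_erase hS)) _
  rw [compKron_kronecker_one_eq_sum, Finset.smul_sum,
    ← Finset.add_sum_erase _ _ (Finset.mem_univ ∅)]
  simp only [smul_smul]
  rw [Matrix.exp_add_of_commute _ _ (Commute.sum_right _ _ _ fun S _ => hcomm ∅ S), hrest,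
    mul_one]
  obtain ⟨w, hw⟩ := Nat.exists_eq_add_of_le' (one_le_wt ha)
  have hQ : Q ∅ = 1 := by simp only [Q, onesKron_empty, Matrix.one_kronecker_one]
  rw [hQ, exp_smul_of_isIdempotentElem IsIdempotentElem.one, compKronCoeff_empty, hw,
    Nat.add_sub_cancel, sub_smul, one_smul, add_sub_cancel]
  congr 2
  simp only [c]
  push_cast
  ring

/-- for nonzero `a ∈ (ℤ/2)^d`, `n_i ≥ 3` and `h = gcd(n_1,…,n_d)`,
`exp(-i(2π/h)(M_a ⊗ I_{2^r})) = exp((-1)^{w(a)-1}(2π/h)i)·I`. -/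
theorem stmt12 (d r : ℕ) (hd : 0 < d) (n : Fin d → ℕ) (hn : ∀ i, 3 ≤ n i)
    (a : Fin d → ZMod 2) (ha : a ≠ 0) :
    NormedSpace.exp
        ((-Complex.I * ((2 * Real.pi / ((Finset.univ.gcd n : ℕ) : ℝ) : ℝ) : ℂ)) •
          ((compKron n a) ⊗ₖ (1 : Matrix (Fin r → ZMod 2) (Fin r → ZMod 2) ℂ))) =
      Complex.exp ((-1 : ℂ) ^ (wt a - 1) *
          ((2 * Real.pi / ((Finset.univ.gcd n : ℕ) : ℝ) : ℝ) : ℂ) * Complex.I) •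
        (1 : Matrix ((∀ i, Fin (n i)) × (Fin r → ZMod 2))
          ((∀ i, Fin (n i)) × (Fin r → ZMod 2)) ℂ) :=
  stmt12_general d r n hn a ha
end

section
/- Let 𝒜 ⊆ (ℤ/2)^r \ {0} be nonempty, and let B = Σ_{a∈𝒜} M_a with M_a = A_{K_2}^{a_1} ⊗ ⋯ ⊗ A_{K_2}^{a_r} (the adjacency matrix of the cubelike graph NEPS(K_2,…,K_2; 𝒜)). Set c = Σ_{a∈𝒜} a ∈ (ℤ/2)^r. Then exp(-i(π/2)B) = (-i)^{|𝒜|} · M_c (where M_0 = I_{2^r}). In particular: if c ≠ 0, the cubelike graph admits perfect state transfer from every vertex u to u + c at time π/2; if c = 0, it is periodic with period π/2. -/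
/-!
The matrices `M_a` are commuting involutions with `M_a M_b = M_{a+b}`. For an involution `M`
the exponential series splits into even and odd parts, `exp (iθ M) = cos θ + i sin θ M`, so
`exp (-iπ/2 M_a) = -i M_a`; by commutativity `exp (-iπ/2 B)` is the product of these factors,
which is `(-i)^{|𝒜|} M_c`.
-/

open Kronecker

open NormedSpace
open Complex (I cos sin)
open scoped Nat

theorem exp_smul_of_mul_self_eq_one {A : Type*} [Ring A] [Algebra ℂ A] [TopologicalSpace A]
    [IsTopologicalRing A] [ContinuousSMul ℂ A] [T2Space A] {M : A} (hM : M * M = 1) (z : ℂ) :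
    exp ((z * I) • M) = cos z • 1 + (sin z * I) • M := by
  have heven (k : ℕ) : M ^ (2 * k) = 1 := by rw [pow_mul, sq, hM, one_pow]
  have hcoeff (n : ℕ) : (n ! : ℂ)⁻¹ • ((z * I) • M) ^ n = ((z * I) ^ n / n !) • M ^ n := by
    rw [smul_pow, smul_smul, div_eq_inv_mul]
  rw [exp_eq_tsum ℂ]
  refine HasSum.tsum_eq (HasSum.even_add_odd ?_ ?_)
  · convert (Complex.hasSum_cos' z).smul_const (1 : A) using 2 with k
    rw [hcoeff, heven]
  · convert ((Complex.hasSum_sin' z).mul_right I).smul_const M using 2 with k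
    rw [hcoeff, pow_succ M, heven, one_mul, div_mul_cancel₀ _ Complex.I_ne_zero]

theorem exp_neg_I_mul_pi_div_two_smul {A : Type*} [Ring A] [Algebra ℂ A] [TopologicalSpace A]
    [IsTopologicalRing A] [ContinuousSMul ℂ A] [T2Space A] {M : A} (hM : M * M = 1) :
    exp ((-I * ((Real.pi / 2 : ℝ) : ℂ)) • M) = -I • M := by
  have h := exp_smul_of_mul_self_eq_one hM (-((Real.pi / 2 : ℝ) : ℂ))
  rw [Complex.cos_neg, Complex.sin_neg, ← Complex.ofReal_cos, ← Complex.ofReal_sin,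
    Real.cos_pi_div_two, Real.sin_pi_div_two] at h
  simpa [mul_comm] using h

theorem ite_A2_one_apply (b x y : ZMod 2) :
    (if b = 1 then A2 else 1) x y = if y = x + b then 1 else 0 := by
  fin_cases b <;> fin_cases x <;> fin_cases y <;> rfl

section Cube

variable {r : ℕ}

theorem cube_apply (a u v : Fin r → ZMod 2) :
    cube a u v = if v = u + a then 1 else 0 := by
  simp only [cube, Matrix.of_apply, ite_A2_one_apply, Finset.prod_boole, funext_iff,
    Finset.mem_univ, true_implies, Pi.add_apply]

theorem cube_mul (a b : Fin r → ZMod 2) : cube a * cube b = cube (a + b) := by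
  ext u v
  simp only [Matrix.mul_apply, cube_apply, ite_mul, one_mul, zero_mul, Finset.sum_ite_eq',
    Finset.mem_univ, if_true, add_assoc]

theorem cube_zero : cube (0 : Fin r → ZMod 2) = 1 := by
  ext u v
  simp [cube_apply, Matrix.one_apply, eq_comm]

theorem cube_mul_self (a : Fin r → ZMod 2) : cube a * cube a = 1 := by
  rw [cube_mul, show a + a = 0 from funext fun j => CharTwo.add_self_eq_zero (a j), cube_zero]

theorem cube_commute (a b : Fin r → ZMod 2) : Commute (cube a) (cube b) := by
  rw [Commute, SemiconjBy, cube_mul, cube_mul, add_comm]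

theorem exp_neg_I_mul_pi_div_two_smul_sum_cube (S : Finset (Fin r → ZMod 2)) :
    exp ((-I * ((Real.pi / 2 : ℝ) : ℂ)) • ∑ a ∈ S, cube a) =
      (-I) ^ S.card • cube (∑ a ∈ S, a) := by
  classical
  induction S using Finset.induction with
  | empty => simp [cube_zero]
  | insert a S ha ih =>
    have hcomm : Commute ((-I * ((Real.pi / 2 : ℝ) : ℂ)) • cube a)
        ((-I * ((Real.pi / 2 : ℝ) : ℂ)) • ∑ b ∈ S, cube b) :=
      ((Commute.sum_right _ _ _ fun b _ => cube_commute a b).smul_right _).smul_left _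
    rw [Finset.sum_insert ha, smul_add, Matrix.exp_add_of_commute _ _ hcomm, ih,
      exp_neg_I_mul_pi_div_two_smul (cube_mul_self a), smul_mul_smul_comm, cube_mul,
      Finset.card_insert_of_notMem ha, Finset.sum_insert ha, pow_succ']

theorem norm_neg_I_pow_smul_cube_apply (n : ℕ) (c u v : Fin r → ZMod 2) :
    ‖((-I) ^ n • cube c) u v‖ = if v = u + c then 1 else 0 := by
  simp [cube_apply, apply_ite]

end Cube

theorem stmt14_general (r : ℕ) (𝒜 : Finset (Fin r → ZMod 2)) :
    NormedSpace.exp ((-Complex.I * ((Real.pi / 2 : ℝ) : ℂ)) • ∑ a ∈ 𝒜, cube a) =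
      (-Complex.I) ^ 𝒜.card • cube (∑ a ∈ 𝒜, a) ∧
    ((∑ a ∈ 𝒜, a) ≠ 0 → ∀ u : Fin r → ZMod 2,
      u ≠ u + ∑ a ∈ 𝒜, a ∧
      ‖(NormedSpace.exp ((-Complex.I * ((Real.pi / 2 : ℝ) : ℂ)) •
        ∑ a ∈ 𝒜, cube a)) u (u + ∑ a ∈ 𝒜, a)‖ = 1) ∧
    ((∑ a ∈ 𝒜, a) = 0 → ∀ u : Fin r → ZMod 2,
      ‖(NormedSpace.exp ((-Complex.I * ((Real.pi / 2 : ℝ) : ℂ)) •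
        ∑ a ∈ 𝒜, cube a)) u u‖ = 1) := by
  have hexp := exp_neg_I_mul_pi_div_two_smul_sum_cube 𝒜
  refine ⟨hexp, fun hc u => ⟨?_, ?_⟩, fun hc u => ?_⟩
  · simpa using hc
  · rw [hexp, norm_neg_I_pow_smul_cube_apply, if_pos rfl]
  · rw [hexp, norm_neg_I_pow_smul_cube_apply, hc, add_zero, if_pos rfl]

/-- for nonempty `𝒜 ⊆ (ℤ/2)^r \ {0}` with `B = Σ_{a∈𝒜} M_a` and
`c = Σ_{a∈𝒜} a`, one has `exp(-i(π/2)B) = (-i)^{|𝒜|}·M_c`. In particular, if `c ≠ 0`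
the cubelike graph admits PST from `u` to `u + c` at time `π/2`, and if `c = 0` it is
periodic with period `π/2`. -/
theorem stmt14 (r : ℕ) (𝒜 : Finset (Fin r → ZMod 2)) (h1 : 𝒜.Nonempty) (h0 : 0 ∉ 𝒜) :
    NormedSpace.exp ((-Complex.I * ((Real.pi / 2 : ℝ) : ℂ)) • ∑ a ∈ 𝒜, cube a) =
      (-Complex.I) ^ 𝒜.card • cube (∑ a ∈ 𝒜, a) ∧
    ((∑ a ∈ 𝒜, a) ≠ 0 → ∀ u : Fin r → ZMod 2,
      u ≠ u + ∑ a ∈ 𝒜, a ∧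
      ‖(NormedSpace.exp ((-Complex.I * ((Real.pi / 2 : ℝ) : ℂ)) •
        ∑ a ∈ 𝒜, cube a)) u (u + ∑ a ∈ 𝒜, a)‖ = 1) ∧
    ((∑ a ∈ 𝒜, a) = 0 → ∀ u : Fin r → ZMod 2,
      ‖(NormedSpace.exp ((-Complex.I * ((Real.pi / 2 : ℝ) : ℂ)) •
        ∑ a ∈ 𝒜, cube a)) u u‖ = 1) :=
  stmt14_general r 𝒜
end
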